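/- The Mrugala metric G has signature (n+1, n): for every m ∈ P the invertible matrix S(m) whose columns are the vectors ξ = ∂_{x^0}, u_l = (P_l + X_l)/√2 and v_l = (P_l − X_l)/√2 (l = 1,…,n), where P_l = ∂_{p_l} and X_l = ∂_{x^l} − p_l ∂_{x^0}, satisfies S(m)ᵀ G(m) S(m) = diag(1, I_n, −I_n). -/

import Mathlib

abbrev Idx (n : ℕ) : Type := Unit ⊕ (Fin n ⊕ Fin n)
abbrev Pt (n : ℕ) : Type := Idx n → ℝ

/-- The Mrugala metric `G = [[1, 0, pᵀ], [0, 0ₙ, Iₙ], [p, Iₙ, p pᵀ]]`. -/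
def Gmat (n : ℕ) (m : Pt n) : Matrix (Idx n) (Idx n) ℝ :=
  Matrix.of fun a b =>
    match a, b with
    | Sum.inl _, Sum.inl _ => 1
    | Sum.inl _, Sum.inr (Sum.inl _) => 0
    | Sum.inl _, Sum.inr (Sum.inr j) => m (Sum.inr (Sum.inl j))
    | Sum.inr (Sum.inl _), Sum.inl _ => 0
    | Sum.inr (Sum.inl _), Sum.inr (Sum.inl _) => 0
    | Sum.inr (Sum.inl i), Sum.inr (Sum.inr j) => if i = j then 1 else 0
    | Sum.inr (Sum.inr i), Sum.inl _ => m (Sum.inr (Sum.inl i))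
    | Sum.inr (Sum.inr i), Sum.inr (Sum.inl j) => if i = j then 1 else 0
    | Sum.inr (Sum.inr i), Sum.inr (Sum.inr j) =>
        m (Sum.inr (Sum.inl i)) * m (Sum.inr (Sum.inl j))

/-- The tangent vector `ξ = ∂_{x^0}`. -/
noncomputable def xiVec (n : ℕ) : Pt n := Pi.single (Sum.inl ()) 1

/-- The tangent vector `P_l = ∂_{p_l}`. -/
noncomputable def Pvec (n : ℕ) (l : Fin n) : Pt n := Pi.single (Sum.inr (Sum.inl l)) 1

/-- The tangent vector `X_l = ∂_{x^l} - p_l ∂_{x^0}`. -/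
noncomputable def Xvec (n : ℕ) (m : Pt n) (l : Fin n) : Pt n :=
  (Pi.single (Sum.inr (Sum.inr l)) 1 : Pt n) -
    m (Sum.inr (Sum.inl l)) • (Pi.single (Sum.inl ()) 1 : Pt n)

/-- The matrix with columns `ξ`, `u_l = (P_l + X_l)/√2`, `v_l = (P_l - X_l)/√2`. -/
noncomputable def Smat (n : ℕ) (m : Pt n) : Matrix (Idx n) (Idx n) ℝ :=
  Matrix.of fun a b =>
    match b with
    | Sum.inl _ => xiVec n a
    | Sum.inr (Sum.inl l) => ((Real.sqrt 2)⁻¹ • (Pvec n l + Xvec n m l)) a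
    | Sum.inr (Sum.inr l) => ((Real.sqrt 2)⁻¹ • (Pvec n l - Xvec n m l)) a

/-- The diagonal matrix `diag(1, Iₙ, -Iₙ)`. -/
def Dmat (n : ℕ) : Matrix (Idx n) (Idx n) ℝ :=
  Matrix.of fun a b =>
    match a, b with
    | Sum.inl _, Sum.inl _ => 1
    | Sum.inr (Sum.inl i), Sum.inr (Sum.inl j) => if i = j then 1 else 0
    | Sum.inr (Sum.inr i), Sum.inr (Sum.inr j) => if i = j then (-1 : ℝ) else 0
    | _, _ => 0

/-!
In the frame `ξ, P_l, X_l` the metric is `[[1, 0, 0], [0, 0, I], [0, I, 0]]`: `ξ` is a unit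
vector orthogonal to every `P_l` and `X_l`, the `P_l` and the `X_l` span null subspaces, and
`G(P_i, X_j) = δ_ij`. Rotating each hyperbolic pair to `(P_l ± X_l)/√2` turns the last block
into `diag(I, -I)`. Taking determinants, `det(S)² det(G) = det(D) = ±1`, so `S` is invertible.
-/

open scoped Matrix

theorem Matrix.transpose_mul_mul_apply {ι R : Type*} [Fintype ι] [DecidableEq ι] [CommRing R]
    (A M : Matrix ι ι R) (a b : ι) :
    (Aᵀ * M * A) a b = Matrix.toBilin' M (Aᵀ a) (Aᵀ b) := by
  rw [Matrix.mul_mul_apply, Matrix.toBilin'_apply']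

theorem Matrix.isUnit_of_isUnit_transpose_mul_mul {ι R : Type*} [Fintype ι] [DecidableEq ι]
    [CommRing R] {A M : Matrix ι ι R} (h : IsUnit (Aᵀ * M * A)) : IsUnit A := by
  rw [Matrix.isUnit_iff_isUnit_det, Matrix.det_mul] at h
  exact (Matrix.isUnit_iff_isUnit_det A).2 (isUnit_of_mul_isUnit_right h)

theorem inv_sqrt_two_mul_self : (√2)⁻¹ * (√2)⁻¹ = (2 : ℝ)⁻¹ := by
  rw [← mul_inv, Real.mul_self_sqrt zero_le_two]

theorem Dmat_eq_diagonal (n : ℕ) :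
    Dmat n = Matrix.diagonal (Sum.elim 1 (Sum.elim 1 (-1))) := by
  ext (_ | i | i) (_ | j | j) <;> simp [Dmat, Matrix.diagonal_apply]

theorem isUnit_Dmat (n : ℕ) : IsUnit (Dmat n) := by
  rw [Dmat_eq_diagonal, Matrix.isUnit_diagonal, Pi.isUnit_iff]
  rintro (_ | i | i) <;> simp

section Frame

variable {n : ℕ} (m : Pt n) (i j : Fin n)

local notation "𝒢" => Matrix.toBilin' (Gmat n m)

@[simp] theorem toBilin'_Gmat_xiVec_xiVec : 𝒢 (xiVec n) (xiVec n) = 1 :=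
  Matrix.toBilin'_single _ _ _

@[simp] theorem toBilin'_Gmat_xiVec_Pvec : 𝒢 (xiVec n) (Pvec n j) = 0 :=
  Matrix.toBilin'_single _ _ _

@[simp] theorem toBilin'_Gmat_Pvec_xiVec : 𝒢 (Pvec n i) (xiVec n) = 0 :=
  Matrix.toBilin'_single _ _ _

@[simp] theorem toBilin'_Gmat_Pvec_Pvec : 𝒢 (Pvec n i) (Pvec n j) = 0 :=
  Matrix.toBilin'_single _ _ _

@[simp] theorem toBilin'_Gmat_xiVec_Xvec : 𝒢 (xiVec n) (Xvec n m j) = 0 := by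
  simp [Xvec, xiVec, Gmat]

@[simp] theorem toBilin'_Gmat_Xvec_xiVec : 𝒢 (Xvec n m i) (xiVec n) = 0 := by
  simp [Xvec, xiVec, Gmat]

@[simp] theorem toBilin'_Gmat_Pvec_Xvec :
    𝒢 (Pvec n i) (Xvec n m j) = if i = j then 1 else 0 := by
  simp [Xvec, Pvec, Gmat]

@[simp] theorem toBilin'_Gmat_Xvec_Pvec :
    𝒢 (Xvec n m i) (Pvec n j) = if i = j then 1 else 0 := by
  simp [Xvec, Pvec, Gmat]

@[simp] theorem toBilin'_Gmat_Xvec_Xvec : 𝒢 (Xvec n m i) (Xvec n m j) = 0 := by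
  simp [Xvec, Gmat, mul_comm]

@[simp] theorem Smat_transpose_inl (u : Unit) : (Smat n m)ᵀ (Sum.inl u) = xiVec n := rfl

@[simp] theorem Smat_transpose_inr_inl :
    (Smat n m)ᵀ (Sum.inr (Sum.inl i)) = (√2)⁻¹ • (Pvec n i + Xvec n m i) := rfl

@[simp] theorem Smat_transpose_inr_inr :
    (Smat n m)ᵀ (Sum.inr (Sum.inr i)) = (√2)⁻¹ • (Pvec n i - Xvec n m i) := rfl

theorem Smat_transpose_mul_Gmat_mul_Smat : (Smat n m)ᵀ * Gmat n m * Smat n m = Dmat n := by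
  ext (_ | i | i) (_ | j | j) <;>
    simp [Matrix.transpose_mul_mul_apply, Dmat, ← mul_assoc, inv_sqrt_two_mul_self] <;>
    split_ifs <;> norm_num

end Frame

theorem mrugala_signature (n : ℕ) (m : Pt n) :
    IsUnit (Smat n m) ∧ (Smat n m).transpose * Gmat n m * Smat n m = Dmat n := by
  have hgram := Smat_transpose_mul_Gmat_mul_Smat m
  refine ⟨Matrix.isUnit_of_isUnit_transpose_mul_mul (M := Gmat n m) ?_, hgram⟩
  exact hgram ▸ isUnit_Dmat n
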